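/- arXiv:1805.11841 — 8 statements merged into one kernel-verified Lean document; each statement's English description precedes it below -/
import Mathlib

section
/- Let x₁,...,x₇ be complex numbers with x₂ ≠ 0, x₄ ≠ 0, x₆ ≠ 0. Set y₁ = x₃(x₁+x₄)/x₂, y₂ = x₅(x₄+x₇)/x₆, and let X₃, X₄, X₅ be given by the positive R-operator formulas. Then the five Ptolemy relations of the positive-crossing octahedron hold: x₂·y₁ = x₃·x₄ + x₁·x₃; x₆·y₂ = x₅·x₇ + x₄·x₅; x₄·X₄ = x₁·x₇ + y₁·y₂; X₅·y₁ = x₃·X₄ + x₃·x₇; and X₃·y₂ = x₅·X₄ + x₁·x₅. -/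
theorem stmt_0 (x1 x2 x3 x4 x5 x6 x7 : ℂ)
    (h2 : x2 ≠ 0) (h4 : x4 ≠ 0) (h6 : x6 ≠ 0)
    (y1 y2 X3 X4 X5 : ℂ)
    (hy1 : y1 = x3 * (x1 + x4) / x2)
    (hy2 : y2 = x5 * (x4 + x7) / x6)
    (hX3 : X3 = (x1*x3*x5 + x3*x4*x5 + x1*x2*x6) / (x2*x4))
    (hX4 : X4 = (x1*x3*x4*x5 + x3*x4^2*x5 + x1*x3*x5*x7 + x3*x4*x5*x7 + x1*x2*x6*x7) / (x2*x4*x6))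
    (hX5 : X5 = (x3*x4*x5 + x3*x5*x7 + x2*x6*x7) / (x4*x6)) :
    x2 * y1 = x3 * x4 + x1 * x3 ∧
    x6 * y2 = x5 * x7 + x4 * x5 ∧
    x4 * X4 = x1 * x7 + y1 * y2 ∧
    X5 * y1 = x3 * X4 + x3 * x7 ∧
    X3 * y2 = x5 * X4 + x1 * x5 := by
  subst hy1 hy2 hX3 hX4 hX5
  refine ⟨?_, ?_, ?_, ?_, ?_⟩ <;> field_simp <;> ring
end

section
/- Let x₁,...,x₇ be complex numbers with x₂, x₃, x₄, x₅, x₆ all nonzero, x₁ + x₄ ≠ 0 and x₄ + x₇ ≠ 0. Suppose complex numbers y₁, y₂, X₃, X₄, X₅ satisfy the five Ptolemy relations of the positive-crossing octahedron: x₂·y₁ = x₃·x₄ + x₁·x₃; x₆·y₂ = x₅·x₇ + x₄·x₅; x₄·X₄ = x₁·x₇ + y₁·y₂; X₅·y₁ = x₃·X₄ + x₃·x₇; and X₃·y₂ = x₅·X₄ + x₁·x₅. Then necessarily y₁ = x₃(x₁+x₄)/x₂, y₂ = x₅(x₄+x₇)/x₆, and X₃, X₄, X₅ are given by the positive R-operator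 formulas. -/
theorem stmt_1 (x1 x2 x3 x4 x5 x6 x7 : ℂ)
    (h2 : x2 ≠ 0) (h3 : x3 ≠ 0) (h4 : x4 ≠ 0) (h5 : x5 ≠ 0) (h6 : x6 ≠ 0)
    (h14 : x1 + x4 ≠ 0) (h47 : x4 + x7 ≠ 0)
    (y1 y2 X3 X4 X5 : ℂ)
    (e1 : x2 * y1 = x3 * x4 + x1 * x3)
    (e2 : x6 * y2 = x5 * x7 + x4 * x5)
    (e3 : x4 * X4 = x1 * x7 + y1 * y2)
    (e4 : X5 * y1 = x3 * X4 + x3 * x7)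
    (e5 : X3 * y2 = x5 * X4 + x1 * x5) :
    y1 = x3 * (x1 + x4) / x2 ∧
    y2 = x5 * (x4 + x7) / x6 ∧
    X3 = (x1*x3*x5 + x3*x4*x5 + x1*x2*x6) / (x2*x4) ∧
    X4 = (x1*x3*x4*x5 + x3*x4^2*x5 + x1*x3*x5*x7 + x3*x4*x5*x7 + x1*x2*x6*x7) / (x2*x4*x6) ∧
    X5 = (x3*x4*x5 + x3*x5*x7 + x2*x6*x7) / (x4*x6) := by
  have E3 : x2*x4*x6*X4 =
      x1*x3*x4*x5 + x3*x4^2*x5 + x1*x3*x5*x7 + x3*x4*x5*x7 + x1*x2*x6*x7 := by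
    linear_combination x2*x6*e3 + x6*y2*e1 + (x3*x4 + x1*x3)*e2
  have E5 : (x4*x6*X5) * (x3*(x1+x4)) =
      (x3*x4*x5 + x3*x5*x7 + x2*x6*x7) * (x3*(x1+x4)) := by
    linear_combination x2*x4*x6*e4 + x3*E3 - x4*x6*X5*e1
  have E5' := mul_right_cancel₀ (mul_ne_zero h3 h14) E5
  have E3' : (x2*x4*X3) * (x5*(x4+x7)) =
      (x1*x3*x5 + x3*x4*x5 + x1*x2*x6) * (x5*(x4+x7)) := by
    linear_combination x2*x4*x6*e5 + x5*E3 - x2*x4*X3*e2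
  have E3'' := mul_right_cancel₀ (mul_ne_zero h5 h47) E3'
  refine ⟨?_, ?_, ?_, ?_, ?_⟩
  · field_simp; linear_combination e1
  · field_simp; linear_combination e2
  · rw [eq_div_iff (mul_ne_zero h2 h4)]; linear_combination E3''
  · rw [eq_div_iff (mul_ne_zero (mul_ne_zero h2 h4) h6)]; linear_combination E3
  · rw [eq_div_iff (mul_ne_zero h4 h6)]; linear_combination E5'
end

section
/- Let x₁,...,x₇ be complex numbers with x₃ ≠ 0, x₄ ≠ 0, x₅ ≠ 0. Set y₁ = x₆(x₄+x₇)/x₅, y₂ = x₂(x₁+x₄)/x₃, and let Y₂, Y₄, Y₆ be given by the negative R-operator formulas. Then the five Ptolemy relations of the negative-crossing octahedron hold: y₁·x₅ = x₄·x₆ + x₆·x₇; x₃·y₂ = x₁·x₂ + x₂·x₄; x₄·Y₄ = y₁·y₂ + x₁·x₇; Y₂·y₁ = x₆·Y₄ + x₁·x₆; and Y₆·y₂ = x₂·x₇ + x₂·Y₄. -/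
theorem stmt_2 (x1 x2 x3 x4 x5 x6 x7 : ℂ)
    (h3 : x3 ≠ 0) (h4 : x4 ≠ 0) (h5 : x5 ≠ 0)
    (y1 y2 Y2 Y4 Y6 : ℂ)
    (hy1 : y1 = x6 * (x4 + x7) / x5)
    (hy2 : y2 = x2 * (x1 + x4) / x3)
    (hY2 : Y2 = (x1*x3*x5 + x1*x2*x6 + x2*x4*x6) / (x3*x4))
    (hY4 : Y4 = (x1*x2*x4*x6 + x2*x4^2*x6 + x1*x3*x5*x7 + x1*x2*x6*x7 + x2*x4*x6*x7) / (x3*x4*x5))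
    (hY6 : Y6 = (x2*x4*x6 + x3*x5*x7 + x2*x6*x7) / (x4*x5)) :
    y1 * x5 = x4 * x6 + x6 * x7 ∧
    x3 * y2 = x1 * x2 + x2 * x4 ∧
    x4 * Y4 = y1 * y2 + x1 * x7 ∧
    Y2 * y1 = x6 * Y4 + x1 * x6 ∧
    Y6 * y2 = x2 * x7 + x2 * Y4 := by
  subst hy1 hy2 hY2 hY4 hY6
  refine ⟨?_, ?_, ?_, ?_, ?_⟩ <;> field_simp <;> ring
end

section
/- Let x₁,...,x₇ be complex numbers with x₂, x₃, x₄, x₅, x₆ all nonzero, x₁ + x₄ ≠ 0 and x₄ + x₇ ≠ 0. Suppose complex numbers y₁, y₂, Y₂, Y₄, Y₆ satisfy the five Ptolemy relations of the negative-crossing octahedron: y₁·x₅ = x₄·x₆ + x₆·x₇; x₃·y₂ = x₁·x₂ + x₂·x₄; x₄·Y₄ = y₁·y₂ + x₁·x₇; Y₂·y₁ = x₆·Y₄ + x₁·x₆; and Y₆·y₂ = x₂·x₇ + x₂·Y₄. Then necessarily y₁ = x₆(x₄+x₇)/x₅, y₂ = x₂(x₁+x₄)/x₃, and Y₂, Y₄,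 Y₆ are given by the negative R-operator formulas. -/
theorem stmt_3 (x1 x2 x3 x4 x5 x6 x7 : ℂ)
    (h2 : x2 ≠ 0) (h3 : x3 ≠ 0) (h4 : x4 ≠ 0) (h5 : x5 ≠ 0) (h6 : x6 ≠ 0)
    (h14 : x1 + x4 ≠ 0) (h47 : x4 + x7 ≠ 0)
    (y1 y2 Y2 Y4 Y6 : ℂ)
    (e1 : y1 * x5 = x4 * x6 + x6 * x7)
    (e2 : x3 * y2 = x1 * x2 + x2 * x4)
    (e3 : x4 * Y4 = y1 * y2 + x1 * x7)
    (e4 : Y2 * y1 = x6 * Y4 + x1 * x6)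
    (e5 : Y6 * y2 = x2 * x7 + x2 * Y4) :
    y1 = x6 * (x4 + x7) / x5 ∧
    y2 = x2 * (x1 + x4) / x3 ∧
    Y2 = (x1*x3*x5 + x1*x2*x6 + x2*x4*x6) / (x3*x4) ∧
    Y4 = (x1*x2*x4*x6 + x2*x4^2*x6 + x1*x3*x5*x7 + x1*x2*x6*x7 + x2*x4*x6*x7) / (x3*x4*x5) ∧
    Y6 = (x2*x4*x6 + x3*x5*x7 + x2*x6*x7) / (x4*x5) := by
  have hy1 : y1 = x6 * (x4 + x7) / x5 := by
    field_simp; linear_combination e1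
  have hy2 : y2 = x2 * (x1 + x4) / x3 := by
    field_simp; linear_combination e2
  have hy1ne : y1 ≠ 0 := by
    rw [hy1]; exact div_ne_zero (mul_ne_zero h6 h47) h5
  have hy2ne : y2 ≠ 0 := by
    rw [hy2]; exact div_ne_zero (mul_ne_zero h2 h14) h3
  have hY4 : Y4 = (x1*x2*x4*x6 + x2*x4^2*x6 + x1*x3*x5*x7 + x1*x2*x6*x7 + x2*x4*x6*x7) / (x3*x4*x5) := by
    subst hy1 hy2
    field_simp at e3 ⊢
    linear_combination e3
  have hY2 : Y2 = (x1*x3*x5 + x1*x2*x6 + x2*x4*x6) / (x3*x4) := by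
    have h := (eq_div_iff hy1ne).mpr e4
    rw [hy1, hY4] at h
    rw [h]; field_simp; ring
  have hY6 : Y6 = (x2*x4*x6 + x3*x5*x7 + x2*x6*x7) / (x4*x5) := by
    have h := (eq_div_iff hy2ne).mpr e5
    rw [hy2, hY4] at h
    rw [h]; field_simp; ring
  exact ⟨hy1, hy2, hY2, hY4, hY6⟩
end

section
/- Let x = (x₁,...,x₇) ∈ ℂ⁷ with x₂ ≠ 0, x₄ ≠ 0, x₆ ≠ 0, and suppose the third, fourth and fifth coordinates X₃, X₄, X₅ of R(x) are all nonzero. Then R⁻(R(x)) = x; that is, the positive and negative Hikami–Inoue R-operators are mutually inverse rational maps on the non-degenerate locus. -/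
set_option maxHeartbeats 1000000


/-- The positive Hikami–Inoue R-operator on `ℂ⁷`. -/
noncomputable def Rpos : (ℂ × ℂ × ℂ × ℂ × ℂ × ℂ × ℂ) → (ℂ × ℂ × ℂ × ℂ × ℂ × ℂ × ℂ) :=
  fun (x1, x2, x3, x4, x5, x6, x7) =>
    (x1, x5,
      (x1*x3*x5 + x3*x4*x5 + x1*x2*x6) / (x2*x4),
      (x1*x3*x4*x5 + x3*x4^2*x5 + x1*x3*x5*x7 + x3*x4*x5*x7 + x1*x2*x6*x7) / (x2*x4*x6),
      (x3*x4*x5 + x3*x5*x7 + x2*x6*x7) / (x4*x6),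
      x3, x7)

/-- The negative Hikami–Inoue R-operator on `ℂ⁷`. -/
noncomputable def Rneg : (ℂ × ℂ × ℂ × ℂ × ℂ × ℂ × ℂ) → (ℂ × ℂ × ℂ × ℂ × ℂ × ℂ × ℂ) :=
  fun (x1, x2, x3, x4, x5, x6, x7) =>
    (x1,
      (x1*x3*x5 + x1*x2*x6 + x2*x4*x6) / (x3*x4),
      x6,
      (x1*x2*x4*x6 + x2*x4^2*x6 + x1*x3*x5*x7 + x1*x2*x6*x7 + x2*x4*x6*x7) / (x3*x4*x5),
      x2,
      (x2*x4*x6 + x3*x5*x7 + x2*x6*x7) / (x4*x5),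
      x7)

theorem stmt_4 (x1 x2 x3 x4 x5 x6 x7 : ℂ)
    (h2 : x2 ≠ 0) (h4 : x4 ≠ 0) (h6 : x6 ≠ 0)
    (hX3 : (Rpos (x1, x2, x3, x4, x5, x6, x7)).2.2.1 ≠ 0)
    (hX4 : (Rpos (x1, x2, x3, x4, x5, x6, x7)).2.2.2.1 ≠ 0)
    (hX5 : (Rpos (x1, x2, x3, x4, x5, x6, x7)).2.2.2.2.1 ≠ 0) :
    Rneg (Rpos (x1, x2, x3, x4, x5, x6, x7)) = (x1, x2, x3, x4, x5, x6, x7) := by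
  simp only [Rpos] at hX3 hX4 hX5
  simp only [Rpos, Rneg, Prod.mk.injEq]
  generalize ha' : (x1*x3*x5 + x3*x4*x5 + x1*x2*x6) / (x2*x4) = a at *
  generalize hb' : (x1*x3*x4*x5 + x3*x4^2*x5 + x1*x3*x5*x7 + x3*x4*x5*x7 + x1*x2*x6*x7) / (x2*x4*x6) = b at *
  generalize hc' : (x3*x4*x5 + x3*x5*x7 + x2*x6*x7) / (x4*x6) = c at *
  have ha : a * (x2*x4) = x1*x3*x5 + x3*x4*x5 + x1*x2*x6 := by
    rw [← ha']; exact div_mul_cancel₀ _ (mul_ne_zero h2 h4)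
  have hb : b * (x2*x4*x6) = x1*x3*x4*x5 + x3*x4^2*x5 + x1*x3*x5*x7 + x3*x4*x5*x7 + x1*x2*x6*x7 := by
    rw [← hb']; exact div_mul_cancel₀ _ (mul_ne_zero (mul_ne_zero h2 h4) h6)
  have hc : c * (x4*x6) = x3*x4*x5 + x3*x5*x7 + x2*x6*x7 := by
    rw [← hc']; exact div_mul_cancel₀ _ (mul_ne_zero h4 h6)
  have hX : (x2*x4) * (x2*x4*x6) * (x4*x6) ≠ 0 := by
    exact mul_ne_zero (mul_ne_zero (mul_ne_zero h2 h4) (mul_ne_zero (mul_ne_zero h2 h4) h6)) (mul_ne_zero h4 h6)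
  have hX' : (x2*x4) * ((x2*x4*x6) * (x2*x4*x6)) * (x4*x6) ≠ 0 := by
    exact mul_ne_zero (mul_ne_zero (mul_ne_zero h2 h4) (mul_ne_zero (mul_ne_zero (mul_ne_zero h2 h4) h6) (mul_ne_zero (mul_ne_zero h2 h4) h6))) (mul_ne_zero h4 h6)
  refine ⟨trivial, ?_, trivial, ?_, trivial, ?_, trivial⟩
  · rw [div_eq_iff (mul_ne_zero hX3 hX4)]
    apply mul_right_cancel₀ hX
    linear_combination (c*x1*x2*x4^2*x6^2 + (-1)*b*x2^2*x4^2*x6^2)*ha + ((-1)*x1*x2*x3*x4*x5*x6 + (-1)*x1*x2^2*x4*x6^2)*hb + (x1*x2*x3*x4^2*x5*x6 + x1^2*x2*x3*x4*x5*x6 + x1^2*x2^2*x4*x6^2)*hc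
  · rw [div_eq_iff (mul_ne_zero (mul_ne_zero hX3 hX4) hX5)]
    apply mul_right_cancel₀ hX'
    linear_combination (c*x1*x2^2*x4^3*x6^3*x7 + (-1)*b*c*x2^2*x4^4*x6^3)*ha + (x2*x3^2*x4^3*x5^2*x6*x7 + x2*x3^2*x4^4*x5^2*x6 + x2^2*x3*x4^3*x5*x6^2*x7 + x1*x2*x3^2*x4^2*x5^2*x6*x7 + x1*x2*x3^2*x4^3*x5^2*x6 + x1*x2^2*x3*x4^2*x5*x6^2*x7 + x1*x2^2*x3*x4^3*x5*x6^2 + (-1)*c*x2*x3*x4^4*x5*x6^2 + (-1)*c*x1*x2*x3*x4^3*x5*x6^2 + (-1)*c*x1*x2^2*x4^3*x6^3 + b*x2^2*x3*x4^3*x5*x6^2)*hb + ((-1)*x2*x3^2*x4^4*x5^2*x6*x7 + (-1)*x2*x3^2*x4^5*x5^2*x6 + (-2)*x1*x2*x3^2*x4^3*x5^2*x6*x7 + (-2)*x1*x2*x3^2*x4^4*x5^2*x6 + (-1)*x1*x2^2*x3*x4^3*x5*x6^2*x7 + (-1)*x1*x2^2*x3*x4^4*x5*x6^2 + (-1)*x1^2*x2*x3^2*x4^2*x5^2*x6*x7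 + (-1)*x1^2*x2*x3^2*x4^3*x5^2*x6 + (-1)*x1^2*x2^2*x3*x4^2*x5*x6^2*x7 + (-1)*x1^2*x2^2*x3*x4^3*x5*x6^2)*hc
  · rw [div_eq_iff (mul_ne_zero hX4 hX5)]
    apply mul_right_cancel₀ hX
    linear_combination (c*x2*x4^2*x6^2*x7)*ha + (x2*x3*x4^2*x5*x6 + (-1)*c*x2*x4^2*x6^2)*hb + ((-1)*x2*x3*x4^3*x5*x6 + (-1)*x1*x2*x3*x4^2*x5*x6)*hc
end

section
/- Let a, b, d be nonzero complex numbers and let σ ∈ {1, −1}. Then the product of six 2×2 matrices E(a)·S(−σd/(ab))·E(b)·S(−σa/(bd))·E(d)·S(−σb/(da)) equals σ times the 2×2 identity matrix. (This is the statement that the cocycle Φ_c associated to a Ptolemy assignment automatically satisfies the cocycle condition around every hexagonal face of a truncated tetrahedron, up to sign in SL(2,ℂ), i.e., exactly in PSL(2,ℂ).) -/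
open Matrix

/-- Upper triangular unipotent matrix `S(t) = [[1, t], [0, 1]]`. -/
def S (t : ℂ) : Matrix (Fin 2) (Fin 2) ℂ := !![1, t; 0, 1]

/-- Counter-diagonal matrix `E(x) = [[0, -x⁻¹], [x, 0]]`. -/
noncomputable def E (x : ℂ) : Matrix (Fin 2) (Fin 2) ℂ := !![0, -x⁻¹; x, 0]

set_option maxHeartbeats 1600000 in
theorem stmt_6 (a b d σ : ℂ)
    (ha : a ≠ 0) (hb : b ≠ 0) (hd : d ≠ 0)
    (hσ : σ = 1 ∨ σ = -1) :
    E a * S (-σ * d / (a * b)) * E b * S (-σ * a / (b * d)) * E d * S (-σ * b / (d * a)) =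
      σ • (1 : Matrix (Fin 2) (Fin 2) ℂ) := by
  rcases hσ with h | h <;> subst h <;>
  · simp only [S, E, Matrix.smul_eq_diagonal_mul]
    ext i j
    fin_cases i <;> fin_cases j <;>
      · simp [Matrix.mul_apply, Fin.sum_univ_succ, Matrix.one_apply]
        field_simp
        try ring
        try tauto
end

section
/- Let c01, c02, c03, c12, c13, c23 be nonzero complex numbers and let σ₁, σ₂, σ₃ ∈ {1, −1}. Then the product of 2×2 matrices S(σ₃·c12/(c01·c02)) · S(σ₁·c23/(c02·c03)) · S(−σ₂·c13/(c01·c03)) equals the identity matrix if and only if the Ptolemy relation σ₂·c02·c13 = σ₃·c03·c12 + σ₁·c01·c23 holds. (This is the statement that the cocycle condition around the small triangular face at vertex 0 of a truncated tetrahedron is equivalent to the Ptolemy relation with obstruction signs σ₁, σ₂, σ₃.) -/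
open Matrix

lemma S_mul (a b : ℂ) : S a * S b = S (a + b) := by
  simp [S, Matrix.mul_fin_two]; ring

lemma S_eq_one (t : ℂ) : S t = 1 ↔ t = 0 := by
  constructor
  · intro h
    have := congrFun (congrFun h 0) 1
    simpa [S, Matrix.one_apply] using this
  · rintro rfl
    ext i j
    fin_cases i <;> fin_cases j <;> simp [S, Matrix.one_apply]

theorem stmt_7 (c01 c02 c03 c12 c13 c23 σ1 σ2 σ3 : ℂ)
    (h01 : c01 ≠ 0) (h02 : c02 ≠ 0) (h03 : c03 ≠ 0)
    (h12 : c12 ≠ 0) (h13 : c13 ≠ 0) (h23 : c23 ≠ 0)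
    (hσ1 : σ1 = 1 ∨ σ1 = -1) (hσ2 : σ2 = 1 ∨ σ2 = -1) (hσ3 : σ3 = 1 ∨ σ3 = -1) :
    S (σ3 * c12 / (c01 * c02)) * S (σ1 * c23 / (c02 * c03)) * S (-σ2 * c13 / (c01 * c03)) =
      (1 : Matrix (Fin 2) (Fin 2) ℂ) ↔
    σ2 * c02 * c13 = σ3 * c03 * c12 + σ1 * c01 * c23 := by
  rw [S_mul, S_mul, S_eq_one]
  rw [div_add_div _ _ (mul_ne_zero h01 h02) (mul_ne_zero h02 h03), div_add_div _ _
    (mul_ne_zero (mul_ne_zero h01 h02) (mul_ne_zero h02 h03)) (mul_ne_zero h01 h03),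
    div_eq_zero_iff]
  have hd : (c01 * c02 * (c02 * c03)) * (c01 * c03) ≠ 0 := by
    exact mul_ne_zero (mul_ne_zero (mul_ne_zero h01 h02) (mul_ne_zero h02 h03))
      (mul_ne_zero h01 h03)
  have h123 : c01 * c02 * c03 ≠ 0 := mul_ne_zero (mul_ne_zero h01 h02) h03
  constructor
  · rintro (h | h)
    · have : c01 * c02 * c03 * (σ2 * c02 * c13 - (σ3 * c03 * c12 + σ1 * c01 * c23)) = 0 := by
        linear_combination -h
      rcases mul_eq_zero.mp this with h' | h'
      · exact absurd h' h123
      · linear_combination h'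
    · exact absurd h hd
  · intro h
    left
    linear_combination -c01 * c02 * c03 * h
end

section
/- Let c01, c02, c03, c12, c13, c23 be nonzero complex numbers and let σ₀, σ₁, σ₂, σ₃ ∈ {1, −1} with σ₀·σ₁·σ₂·σ₃ = 1. If the Ptolemy relation σ₂·c02·c13 = σ₃·c03·c12 + σ₁·c01·c23 holds, then the product of 2×2 matrices S(σ₃·c02/(c01·c12)) · S(−σ₀·c23/(c12·c13)) · S(−σ₂·c03/(c01·c13)) equals the identity matrix. (This is the cocycle condition around the small triangular face at vertex 1 of a truncated tetrahedron, given that the obstruction signs form a 2-cocycle on the tetrahedron.) -/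
open Matrix

lemma S_zero : S 0 = (1 : Matrix (Fin 2) (Fin 2) ℂ) := by
  rw [S, Matrix.eta_fin_two 1]
  simp

theorem stmt_8 (c01 c02 c03 c12 c13 c23 σ0 σ1 σ2 σ3 : ℂ)
    (h01 : c01 ≠ 0) (h02 : c02 ≠ 0) (h03 : c03 ≠ 0)
    (h12 : c12 ≠ 0) (h13 : c13 ≠ 0) (h23 : c23 ≠ 0)
    (hσ0 : σ0 = 1 ∨ σ0 = -1) (hσ1 : σ1 = 1 ∨ σ1 = -1)
    (hσ2 : σ2 = 1 ∨ σ2 = -1) (hσ3 : σ3 = 1 ∨ σ3 = -1)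
    (hcocycle : σ0 * σ1 * σ2 * σ3 = 1)
    (hptolemy : σ2 * c02 * c13 = σ3 * c03 * c12 + σ1 * c01 * c23) :
    S (σ3 * c02 / (c01 * c12)) * S (-σ0 * c23 / (c12 * c13)) * S (-σ2 * c03 / (c01 * c13)) =
      (1 : Matrix (Fin 2) (Fin 2) ℂ) := by
  have key : σ3 * c02 * c13 = σ0 * c01 * c23 + σ2 * c03 * c12 := by
    rcases hσ0 with rfl | rfl <;> rcases hσ1 with rfl | rfl <;>
      rcases hσ2 with rfl | rfl <;> rcases hσ3 with rfl | rfl <;>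
      first
        | linear_combination hptolemy
        | linear_combination -hptolemy
        | (exfalso; norm_num at hcocycle)
  have hz : σ3 * c02 / (c01 * c12) + -σ0 * c23 / (c12 * c13) + -σ2 * c03 / (c01 * c13) = 0 := by
    rw [div_add_div _ _ (mul_ne_zero h01 h12) (mul_ne_zero h12 h13),
        div_add_div _ _ (mul_ne_zero (mul_ne_zero h01 h12) (mul_ne_zero h12 h13))
          (mul_ne_zero h01 h13),
        div_eq_zero_iff]
    left
    linear_combination c01 * c12 * c13 * key
  rw [S_mul, S_mul, hz, S_zero]
end
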